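/- arXiv:1701.05113 — 2 statements merged into one kernel-verified Lean document; each statement's English description precedes it below -/
import Mathlib

section
/- Let A = {0,1} and let F be the set of 2-blocks u with u(ε) = u(0) = u(1), i.e., F = {(0,0,0), (1,1,1)}. Then the tree-shift of finite type X_F is strongly irreducible; in fact any two patterns accepted by X_F are connected through the complete prefix code P = {0, 10, 11}. -/
/-- Words over the binary alphabet Σ = {0,1}, encoded as lists of booleans
(0 ↦ `false`, 1 ↦ `true`).  Concatenation of words is list append. -/
abbrev Word : Type := List Bool

/-- An infinite tree over the alphabet `A`: a labeling of Σ* by `A`. -/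
abbrev ITree (A : Type) : Type := Word → A

/-- The shift map σ_w, given by (σ_w t)(x) = t(wx). -/
def shiftW {A : Type} (w : Word) (t : ITree A) : ITree A := fun x => t (w ++ x)

/-- A pattern: a support (set of nodes) together with labels.  Only the values
of `val` on `supp` are relevant. -/
structure Pattern (A : Type) where
  supp : Set Word
  val : Word → A

/-- The support of a pattern is prefix-closed. -/
def Pattern.PrefixClosed {A : Type} (u : Pattern A) : Prop :=
  ∀ x ∈ u.supp, ∀ y : Word, y <+: x → y ∈ u.supp

/-- A leaf of a pattern: a node of the support none of whose children lies in
the support. -/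
def Pattern.IsLeaf {A : Type} (u : Pattern A) (w : Word) : Prop :=
  w ∈ u.supp ∧ ∀ i : Bool, w ++ [i] ∉ u.supp

/-- The pattern `u` is accepted by the tree `t` (rooted at some node `x`). -/
def AcceptedBy {A : Type} (u : Pattern A) (t : ITree A) : Prop :=
  ∃ x : Word, ∀ y ∈ u.supp, u.val y = t (x ++ y)

/-- The pattern `u` is accepted by some tree of `X`. -/
def AcceptedIn {A : Type} (X : Set (ITree A)) (u : Pattern A) : Prop :=
  ∃ t ∈ X, AcceptedBy u t

/-- The set of trees avoiding every pattern of the forbidden set `F`. -/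
def treeShiftOf {A : Type} (F : Set (Pattern A)) : Set (ITree A) :=
  { t | ∀ u ∈ F, ¬ AcceptedBy u t }

/-- A tree-shift: a set of trees of the form `X_F` for a set `F` of finite
(prefix-closed) patterns. -/
def IsTreeShift {A : Type} (X : Set (ITree A)) : Prop :=
  ∃ F : Set (Pattern A), (∀ u ∈ F, u.supp.Finite ∧ u.PrefixClosed) ∧ X = treeShiftOf F

/-- A complete prefix code: a finite set of nonempty words, none a prefix of
another, such that every word of length ≥ max{|p| : p ∈ P} has a prefix in P. -/
def IsCPC (P : Finset Word) : Prop :=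
  ([] : Word) ∉ P ∧
  (∀ p ∈ P, ∀ q ∈ P, p <+: q → p = q) ∧
  (∀ x : Word, P.sup List.length ≤ x.length → ∃ p ∈ P, p <+: x)

/-- Σ^k, the set of all words of length k, as a finite set. -/
def fullCode (k : ℕ) : Finset Word :=
  Finset.image (fun f : Fin k → Bool => List.ofFn f) Finset.univ

/-- Σ_{n-1}: the set of all words of length < n (i.e. length ≤ n-1). -/
def sigmaLt (n : ℕ) : Set Word := { x : Word | x.length < n }

/-- An n-block of `X`: a pattern with support Σ_{n-1} accepted by some tree of `X`. -/
def IsNBlock {A : Type} (X : Set (ITree A)) (n : ℕ) (u : Pattern A) : Prop :=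
  u.supp = sigmaLt n ∧ AcceptedIn X u

/-- A (finite, prefix-closed) pattern accepted by some tree of `X`. -/
def GoodPattern {A : Type} (X : Set (ITree A)) (u : Pattern A) : Prop :=
  u.supp.Finite ∧ u.PrefixClosed ∧ AcceptedIn X u

/-- Patterns `u`, `v` are connected through `P` in `X`: there is `t ∈ X`
agreeing with `u` on its support and with a copy of `v` rooted at `wx` for
every leaf `w` of `u` and every `x ∈ P`. -/
def ConnectedThrough {A : Type} (X : Set (ITree A)) (P : Finset Word) (u v : Pattern A) : Prop :=
  ∃ t ∈ X, (∀ y ∈ u.supp, t y = u.val y) ∧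
    ∀ w : Word, u.IsLeaf w → ∀ x ∈ P, ∀ y ∈ v.supp, t (w ++ x ++ y) = v.val y

/-- Block gluing: a single CPC connects any two n-blocks, for every n. -/
def BlockGluing {A : Type} (X : Set (ITree A)) : Prop :=
  ∃ P : Finset Word, IsCPC P ∧ ∀ n : ℕ, ∀ u v : Pattern A,
    IsNBlock X n u → IsNBlock X n v → ConnectedThrough X P u v

/-- Uniformly block gluing: the CPC can be taken of the form Σ^k. -/
def UniformlyBlockGluing {A : Type} (X : Set (ITree A)) : Prop :=
  ∃ k : ℕ, IsCPC (fullCode k) ∧ ∀ n : ℕ, ∀ u v : Pattern A,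
    IsNBlock X n u → IsNBlock X n v → ConnectedThrough X (fullCode k) u v

/-- Strongly irreducible: a single CPC connects any two accepted patterns. -/
def StronglyIrreducible {A : Type} (X : Set (ITree A)) : Prop :=
  ∃ P : Finset Word, IsCPC P ∧ ∀ u v : Pattern A,
    GoodPattern X u → GoodPattern X v → ConnectedThrough X P u v

/-- Uniformly strongly irreducible: the CPC can be taken of the form Σ^k. -/
def UniformlyStronglyIrreducible {A : Type} (X : Set (ITree A)) : Prop :=
  ∃ k : ℕ, IsCPC (fullCode k) ∧ ∀ u v : Pattern A,
    GoodPattern X u → GoodPattern X v → ConnectedThrough X (fullCode k) u v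

/-- A leaf of a set of nodes. -/
def SetLeaf (L : Set Word) (w : Word) : Prop := w ∈ L ∧ ∀ i : Bool, w ++ [i] ∉ L

/-- Topological mixing. -/
def TopologicallyMixing {A : Type} (X : Set (ITree A)) : Prop :=
  ∀ L1 L2 : Set Word, L1.Finite → L2.Finite →
    (∀ x ∈ L1, ∀ y : Word, y <+: x → y ∈ L1) →
    (∀ x ∈ L2, ∀ y : Word, y <+: x → y ∈ L2) →
    ∃ P : Finset Word, IsCPC P ∧ ∀ t1 ∈ X, ∀ t2 ∈ X, ∃ t ∈ X,
      (∀ y ∈ L1, t y = t1 y) ∧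
      ∀ w : Word, SetLeaf L1 w → ∀ x ∈ P, ∀ y ∈ L2, t (w ++ x ++ y) = t2 y

/-- The vertex tree-shift of the pair of 0-1 matrices `A0`, `A1`. -/
def vertexShift {A : Type} (A0 A1 : A → A → Bool) : Set (ITree A) :=
  { t | ∀ x : Word,
      A0 (t x) (t (x ++ [false])) = true ∧ A1 (t x) (t (x ++ [true])) = true }

/-- The n-blocks of `X`, realized as labelings of Σ_{n-1}; used for counting
`|B_n(X)|`. -/
def blockFuns {A : Type} (X : Set (ITree A)) (n : ℕ) :
    Set ({ x : Word // x.length < n } → A) :=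
  { f | ∃ t ∈ X, ∃ r : Word, ∀ y : { x : Word // x.length < n }, f y = t (r ++ y.val) }

/-- The forbidden set F = {(0,0,0), (1,1,1)}: 2-blocks u (support Σ_1) with
u(ε) = u(0) = u(1). -/
def F910 : Set (Pattern Bool) :=
  { u | u.supp = { x : Word | x.length ≤ 1 } ∧
        u.val [false] = u.val [] ∧ u.val [true] = u.val [] }

/-!
A tree lies in `X_F` iff no node carries the same label as both of its children. Let `t₁`
accept `u` and `t₂` accept `v`, and re-root both at these occurrences. Keep `t₁` everywhere
except strictly below the leaves `w` of `u`; there put a copy `s` of `t₂` at `w0`, `w10` and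
`w11`, and label `w1` by `¬ s(ε)`. The two children of `w` and the two children of `w1` then
carry the distinct labels `s(ε)` and `¬ s(ε)`, so no forbidden block is created, and `v`
occurs at `wx` for every `x ∈ {0, 10, 11}`.
-/

section LocalShift

variable {A : Type}

def localShift (R : A → A → A → Prop) : Set (ITree A) :=
  { t | ∀ x : Word, R (t x) (t (x ++ [false])) (t (x ++ [true])) }

theorem shiftW_mem_localShift {R : A → A → A → Prop} {t : ITree A} (ht : t ∈ localShift R)
    (w : Word) : shiftW w t ∈ localShift R := by
  intro x
  simpa only [shiftW, List.append_assoc] using ht (w ++ x)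

def ITree.node (a : A) (l r : ITree A) : ITree A
  | [] => a
  | false :: y => l y
  | true :: y => r y

theorem ITree.node_mem_localShift {R : A → A → A → Prop} {a : A} {l r : ITree A}
    (hl : l ∈ localShift R) (hr : r ∈ localShift R) (ha : R a (l []) (r [])) :
    ITree.node a l r ∈ localShift R
  | [] => ha
  | false :: x => hl x
  | true :: x => hr x

open Classical in
/-- For an antichain `W`, replaces the subtree of `base` at each `w ∈ W` by `g w`. -/
noncomputable def graft (W : Set Word) (g : Word → ITree A) (base : ITree A) : ITree A :=
  fun y => if h : ∃ w ∈ W, w <+: y then g h.choose (y.drop h.choose.length) else base y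

variable {W : Set Word} {g : Word → ITree A} {base : ITree A}

theorem graft_apply_append (hW : IsAntichain (· <+: ·) W) {w : Word} (hw : w ∈ W)
    (r : Word) : graft W g base (w ++ r) = g w r := by
  have h : ∃ w' ∈ W, w' <+: w ++ r := ⟨w, hw, List.prefix_append w r⟩
  obtain ⟨hw', hpre⟩ := h.choose_spec
  have hchoose : h.choose = w := by
    rcases List.prefix_or_prefix_of_prefix hpre (List.prefix_append w r) with h' | h'
    · exact hW.eq hw' hw h'
    · exact (hW.eq hw hw' h').symm
  rw [graft, dif_pos h, hchoose, List.drop_left]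

theorem graft_apply_of_forall_not_prefix {y : Word} (hy : ∀ w ∈ W, ¬ w <+: y) :
    graft W g base y = base y := by
  rw [graft, dif_neg (by simpa using hy)]

theorem graft_apply_concat_of_forall_not_prefix (hW : IsAntichain (· <+: ·) W)
    (hroot : ∀ w ∈ W, g w [] = base w) {y : Word} (hy : ∀ w ∈ W, ¬ w <+: y) (b : Bool) :
    graft W g base (y ++ [b]) = base (y ++ [b]) := by
  by_cases h : ∃ w ∈ W, w <+: y ++ [b]
  · obtain ⟨w, hw, hpre⟩ := h
    obtain rfl : w = y ++ [b] := (List.prefix_concat_iff.mp hpre).resolve_right (hy w hw)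
    simpa only [List.append_nil] using (graft_apply_append hW hw []).trans (hroot _ hw)
  · push Not at h
    exact graft_apply_of_forall_not_prefix h

theorem graft_mem_localShift {R : A → A → A → Prop} (hW : IsAntichain (· <+: ·) W)
    (hbase : base ∈ localShift R) (hg : ∀ w ∈ W, g w ∈ localShift R)
    (hroot : ∀ w ∈ W, g w [] = base w) : graft W g base ∈ localShift R := by
  intro y
  by_cases hy : ∃ w ∈ W, w <+: y
  · obtain ⟨w, hw, r, rfl⟩ := hy
    simp only [List.append_assoc, graft_apply_append hW hw]
    exact hg w hw r
  · push Not at hy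
    rw [graft_apply_of_forall_not_prefix hy, graft_apply_concat_of_forall_not_prefix hW hroot hy,
      graft_apply_concat_of_forall_not_prefix hW hroot hy]
    exact hbase y

end LocalShift

namespace Pattern

variable {A : Type} {u : Pattern A}

theorem PrefixClosed.eq_of_isLeaf_of_prefix (hu : u.PrefixClosed) {w y : Word}
    (hw : u.IsLeaf w) (hy : y ∈ u.supp) (h : w <+: y) : y = w := by
  obtain ⟨_ | ⟨b, r⟩, rfl⟩ := h
  · exact List.append_nil w
  · exact (hw.2 b (hu _ hy _ ⟨r, by simp⟩)).elim

theorem PrefixClosed.isAntichain_isLeaf (hu : u.PrefixClosed) :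
    IsAntichain (· <+: ·) { w | u.IsLeaf w } :=
  fun _ hw _ hw' hne h => hne (hu.eq_of_isLeaf_of_prefix hw hw'.1 h).symm

end Pattern

theorem treeShiftOf_F910 :
    treeShiftOf F910 = localShift (fun a b c : Bool => ¬ (b = a ∧ c = a)) := by
  ext t
  constructor
  · intro ht x ⟨h0, h1⟩
    refine ht ⟨{ y : Word | y.length ≤ 1 }, fun y => t (x ++ y)⟩ ?_ ⟨x, fun y _ => rfl⟩
    exact ⟨rfl, by simpa using h0, by simpa using h1⟩
  · rintro h u ⟨hs, h0, h1⟩ ⟨x, hx⟩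
    have hval : ∀ y : Word, y.length ≤ 1 → u.val y = t (x ++ y) :=
      fun y hy => hx y (hs ▸ hy)
    refine h x ⟨?_, ?_⟩
    · rw [← hval [false] le_rfl, h0, hval [] (Nat.zero_le _), List.append_nil]
    · rw [← hval [true] le_rfl, h1, hval [] (Nat.zero_le _), List.append_nil]

def bridge910 (a : Bool) (s : ITree Bool) : ITree Bool :=
  ITree.node a s (ITree.node (!s []) s s)

theorem bridge910_mem {s : ITree Bool}
    (hs : s ∈ localShift (fun a b c : Bool => ¬ (b = a ∧ c = a))) (a : Bool) :
    bridge910 a s ∈ localShift (fun a b c : Bool => ¬ (b = a ∧ c = a)) := by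
  refine ITree.node_mem_localShift hs (ITree.node_mem_localShift hs hs ?_) ?_ <;>
    cases a <;> simp [ITree.node]

theorem isCPC_910 : IsCPC ({[false], [true, false], [true, true]} : Finset Word) := by
  refine ⟨by decide, by decide, fun x hx => ?_⟩
  rw [show ({[false], [true, false], [true, true]} : Finset Word).sup List.length = 2 by decide]
    at hx
  match x, hx with
  | false :: b :: rest, _ => exact ⟨[false], by decide, ⟨b :: rest, rfl⟩⟩
  | true :: b :: rest, _ => exact ⟨[true, b], by cases b <;> decide, ⟨rest, rfl⟩⟩

theorem connectedThrough_910 (u v : Pattern Bool)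
    (hu : GoodPattern (treeShiftOf F910) u) (hv : GoodPattern (treeShiftOf F910) v) :
    ConnectedThrough (treeShiftOf F910)
      ({[false], [true, false], [true, true]} : Finset Word) u v := by
  obtain ⟨-, hcu, t₁, ht₁, x, hx⟩ := hu
  obtain ⟨-, -, t₂, ht₂, z, hz⟩ := hv
  rw [treeShiftOf_F910] at ht₁ ht₂ ⊢
  set base := shiftW x t₁
  have hleaf := hcu.isAntichain_isLeaf
  refine ⟨graft { w | u.IsLeaf w } (fun w => bridge910 (base w) (shiftW z t₂)) base,
    graft_mem_localShift hleaf (shiftW_mem_localShift ht₁ x)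
      (fun _ _ => bridge910_mem (shiftW_mem_localShift ht₂ z) _) fun _ _ => rfl,
    fun y hy => ?_, fun w hw p hp y hy => ?_⟩
  · by_cases h : ∃ w, u.IsLeaf w ∧ w <+: y
    · obtain ⟨w, hw, hwy⟩ := h
      obtain rfl := hcu.eq_of_isLeaf_of_prefix hw hy hwy
      simpa only [List.append_nil] using (graft_apply_append hleaf hw []).trans (hx _ hy).symm
    · push Not at h
      exact (graft_apply_of_forall_not_prefix h).trans (hx y hy).symm
  · rw [List.append_assoc, graft_apply_append hleaf hw, hz y hy]
    simp only [Finset.mem_insert, Finset.mem_singleton] at hp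
    rcases hp with rfl | rfl | rfl <;> rfl

/-- X_F for F = {(0,0,0),(1,1,1)} is strongly irreducible; in
fact any two accepted patterns are connected through the CPC {0, 10, 11}. -/
theorem stmt9 :
    StronglyIrreducible (treeShiftOf F910) ∧
    IsCPC ({[false], [true, false], [true, true]} : Finset Word) ∧
    ∀ u v : Pattern Bool,
      GoodPattern (treeShiftOf F910) u → GoodPattern (treeShiftOf F910) v →
      ConnectedThrough (treeShiftOf F910)
        ({[false], [true, false], [true, true]} : Finset Word) u v :=
  ⟨⟨_, isCPC_910, connectedThrough_910⟩, isCPC_910, connectedThrough_910⟩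
end

section
/- There exists a block gluing tree-shift that is not strongly irreducible, and there exists a uniformly block gluing tree-shift that is not uniformly strongly irreducible. -/
/-!
The depth shift, made of the trees whose label at a node depends only on the node's depth,
witnesses both claims. All leaves of an `n`-block sit at depth `n - 1`, so any two `n`-blocks are
glued through `Σ¹` by a tree that is constant on each level. A pattern with leaves at depths `1`
and `2`, however, cannot be glued to a `2`-block carrying different labels on its two levels: for
any word `p` of the code, the copies rooted at `1p` and `00p` put different labels on nodes of the
same depth.
-/

lemma mem_fullCode {k : ℕ} {p : Word} : p ∈ fullCode k ↔ p.length = k := by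
  refine ⟨?_, fun hp =>
    Finset.mem_image.mpr ⟨fun i => p.get (i.cast hp.symm), Finset.mem_univ _, ?_⟩⟩
  · intro hp
    obtain ⟨f, -, rfl⟩ := Finset.mem_image.mp hp
    exact List.length_ofFn
  · subst hp
    exact List.ofFn_get p

lemma sup_length_fullCode (k : ℕ) : (fullCode k).sup List.length = k := by
  refine le_antisymm (Finset.sup_le fun p hp => (mem_fullCode.mp hp).le) ?_
  simpa using Finset.le_sup (f := List.length)
    (mem_fullCode.mpr (List.length_replicate (n := k) (a := false)))

lemma isCPC_fullCode {k : ℕ} (hk : 0 < k) : IsCPC (fullCode k) := by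
  refine ⟨fun h => hk.ne (mem_fullCode.mp h), ?_, ?_⟩
  · intro p hp q hq hpq
    exact hpq.eq_of_length ((mem_fullCode.mp hp).trans (mem_fullCode.mp hq).symm)
  · intro x hx
    rw [sup_length_fullCode] at hx
    exact ⟨x.take k, mem_fullCode.mpr (List.length_take_of_le hx), List.take_prefix k x⟩

lemma IsCPC.nonempty {P : Finset Word} (hP : IsCPC P) : P.Nonempty := by
  obtain ⟨p, hp, -⟩ := hP.2.2 (List.replicate (P.sup List.length) false) (by simp)
  exact ⟨p, hp⟩

lemma UniformlyBlockGluing.blockGluing {A : Type} {X : Set (ITree A)}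
    (hX : UniformlyBlockGluing X) : BlockGluing X :=
  let ⟨k, hk, h⟩ := hX; ⟨fullCode k, hk, h⟩

lemma UniformlyStronglyIrreducible.stronglyIrreducible {A : Type} {X : Set (ITree A)}
    (hX : UniformlyStronglyIrreducible X) : StronglyIrreducible X :=
  let ⟨k, hk, h⟩ := hX; ⟨fullCode k, hk, h⟩

lemma finite_sigmaLt (n : ℕ) : (sigmaLt n).Finite :=
  List.finite_length_lt Bool n

lemma sigmaLt_prefixClosed {n : ℕ} :
    ∀ x ∈ sigmaLt n, ∀ y : Word, y <+: x → y ∈ sigmaLt n :=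
  fun _ hx _ hy => lt_of_le_of_lt hy.length_le hx

lemma Pattern.IsLeaf.length_add_one_of_supp_eq_sigmaLt {A : Type} {u : Pattern A} {w : Word}
    (hw : u.IsLeaf w) {n : ℕ} (hu : u.supp = sigmaLt n) : w.length + 1 = n := by
  obtain ⟨hw, hchild⟩ := hw
  rw [hu] at hw hchild
  have := hchild false
  simp only [sigmaLt, Set.mem_ofPred_eq, List.length_append, List.length_singleton] at hw this
  omega

def depthShift : Set (ITree Bool) :=
  { t | ∀ x y : Word, x.length = y.length → t x = t y }

def levelTree (g : ℕ → Bool) : ITree Bool := fun x => g x.length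

lemma levelTree_mem_depthShift (g : ℕ → Bool) : levelTree g ∈ depthShift :=
  fun _ _ h => congrArg g h

lemma isTreeShift_depthShift : IsTreeShift depthShift := by
  refine ⟨{ u : Pattern Bool | (∃ n, u.supp = sigmaLt n) ∧
      ∃ x ∈ u.supp, ∃ y ∈ u.supp, x.length = y.length ∧ u.val x ≠ u.val y }, ?_, ?_⟩
  · rintro u ⟨⟨n, hs⟩, -⟩
    rw [Pattern.PrefixClosed, hs]
    exact ⟨finite_sigmaLt n, sigmaLt_prefixClosed⟩
  · ext t
    constructor
    · rintro ht u ⟨-, x, hx, y, hy, hxy, hne⟩ ⟨r, hr⟩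
      exact hne (by rw [hr x hx, hr y hy]; exact ht _ _ (by simp [hxy]))
    · intro ht x y hxy
      by_contra hne
      exact ht ⟨sigmaLt (x.length + 1), t⟩
        ⟨⟨_, rfl⟩, x, Nat.lt_succ_self _, y, by simp [sigmaLt, ← hxy], hxy, hne⟩
        ⟨[], fun _ _ => rfl⟩

lemma AcceptedIn.val_eq_of_length_eq {u : Pattern Bool} (hu : AcceptedIn depthShift u)
    {x y : Word} (hx : x ∈ u.supp) (hy : y ∈ u.supp) (hxy : x.length = y.length) :
    u.val x = u.val y := by
  obtain ⟨t, ht, r, hr⟩ := hu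
  rw [hr x hx, hr y hy]
  exact ht _ _ (by simp [hxy])

lemma acceptedIn_depthShift_of_val_eq {u : Pattern Bool} (g : ℕ → Bool)
    (hu : ∀ y ∈ u.supp, u.val y = g y.length) : AcceptedIn depthShift u :=
  ⟨levelTree g, levelTree_mem_depthShift g, [], hu⟩

def levelLabel (u : Pattern Bool) (d : ℕ) : Bool := u.val (List.replicate d false)

lemma IsNBlock.val_eq_levelLabel {n : ℕ} {u : Pattern Bool} (hu : IsNBlock depthShift n u)
    {y : Word} (hy : y ∈ u.supp) : u.val y = levelLabel u y.length := by
  have hy' : List.replicate y.length false ∈ u.supp := by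
    rw [hu.1] at hy ⊢; simpa [sigmaLt] using hy
  exact hu.2.val_eq_of_length_eq hy hy' (by simp)

lemma uniformlyBlockGluing_depthShift : UniformlyBlockGluing depthShift := by
  refine ⟨1, isCPC_fullCode one_pos, fun n u v hu hv => ?_⟩
  refine ⟨levelTree fun d => if d < n then levelLabel u d else levelLabel v (d - n),
    levelTree_mem_depthShift _, fun y hy => ?_, fun w hw x hx y hy => ?_⟩
  · have hyn : y.length < n := by rw [hu.1] at hy; exact hy
    simp only [levelTree, if_pos hyn, hu.val_eq_levelLabel hy]
  · have hw : w.length + 1 = n := hw.length_add_one_of_supp_eq_sigmaLt hu.1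
    have hlen : (w ++ x ++ y).length = n + y.length := by
      simp only [List.length_append, mem_fullCode.mp hx]; omega
    simp only [levelTree, hlen, hv.val_eq_levelLabel hy, Nat.add_sub_cancel_left,
      if_neg (Nat.not_lt.mpr (Nat.le_add_right n _))]

def twoDepthLeaves : Pattern Bool := ⟨{[], [false], [true], [false, false]}, fun _ => false⟩

def twoLevelBlock : Pattern Bool := ⟨sigmaLt 2, fun y => decide (y.length = 1)⟩

lemma goodPattern_twoDepthLeaves : GoodPattern depthShift twoDepthLeaves := by
  refine ⟨by simp [twoDepthLeaves], ?_,
    acceptedIn_depthShift_of_val_eq (fun _ => false) fun _ _ => rfl⟩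
  intro x hx y hy
  rw [← List.mem_inits] at hy
  simp only [twoDepthLeaves, Set.mem_insert_iff, Set.mem_singleton_iff] at hx ⊢
  rcases hx with rfl | rfl | rfl | rfl <;> simp [List.inits] at hy <;> aesop

lemma goodPattern_twoLevelBlock : GoodPattern depthShift twoLevelBlock :=
  ⟨finite_sigmaLt 2, sigmaLt_prefixClosed,
    acceptedIn_depthShift_of_val_eq (fun d => decide (d = 1)) fun _ _ => rfl⟩

lemma not_connectedThrough_twoDepthLeaves_twoLevelBlock {P : Finset Word} (hP : P.Nonempty) :
    ¬ ConnectedThrough depthShift P twoDepthLeaves twoLevelBlock := by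
  obtain ⟨p, hp⟩ := hP
  rintro ⟨t, ht, -, hleaf⟩
  have hleaf₁ : twoDepthLeaves.IsLeaf [true] := by simp [Pattern.IsLeaf, twoDepthLeaves]
  have hleaf₂ : twoDepthLeaves.IsLeaf [false, false] := by simp [Pattern.IsLeaf, twoDepthLeaves]
  have h₁ := hleaf _ hleaf₁ p hp [false] (by simp [twoLevelBlock, sigmaLt])
  have h₂ := hleaf _ hleaf₂ p hp [] (by simp [twoLevelBlock, sigmaLt])
  have := ht ([true] ++ p ++ [false]) ([false, false] ++ p ++ []) (by simp)
  simp_all [twoLevelBlock]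

lemma not_stronglyIrreducible_depthShift : ¬ StronglyIrreducible depthShift := by
  rintro ⟨P, hP, hconn⟩
  exact not_connectedThrough_twoDepthLeaves_twoLevelBlock hP.nonempty
    (hconn _ _ goodPattern_twoDepthLeaves goodPattern_twoLevelBlock)

/-- there is a block gluing tree-shift that is not strongly
irreducible, and a uniformly block gluing tree-shift that is not uniformly
strongly irreducible. -/
theorem stmt13 :
    (∃ X : Set (ITree Bool), IsTreeShift X ∧ BlockGluing X ∧
        ¬ StronglyIrreducible X) ∧
    (∃ X : Set (ITree Bool), IsTreeShift X ∧ UniformlyBlockGluing X ∧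
        ¬ UniformlyStronglyIrreducible X) :=
  ⟨⟨depthShift, isTreeShift_depthShift, uniformlyBlockGluing_depthShift.blockGluing,
      not_stronglyIrreducible_depthShift⟩,
    ⟨depthShift, isTreeShift_depthShift, uniformlyBlockGluing_depthShift,
      fun h => not_stronglyIrreducible_depthShift h.stronglyIrreducible⟩⟩
end
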